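/- arXiv:2512.22561 — 8 statements merged into one kernel-verified Lean document; each statement's English description precedes it below -/
import Mathlib

section
/- Let X be a set, Y a locally convex Hausdorff real topological vector space with topological dual Y*, and G : X × Y → ℝ ∪ {±∞}. Define 𝒢 = {(y,r) ∈ Y × ℝ : ∃ x ∈ X, G(x,y) ≤ r}. Then the following are equivalent: (i) there exists λ ∈ Y* such that G(x,y) + ⟨λ,y⟩ ≥ 0 for all (x,y) ∈ X × Y; (ii) (0,-1) does not belong to the closed convex hull of ℝ₊ · 𝒢. -/
/-!
If `λ` is as in (i), the functional `(y, r) ↦ λ y + r` is nonnegative on `𝒢`, hence on the closed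
convex hull of `ℝ₊ · 𝒢`, while it equals `-1` at `(0, -1)`. Conversely, Hahn–Banach separates
`(0, -1)` from that closed convex cone by some `f`; as the set is a cone, `f ≤ 0` on `𝒢` and
`f (0, 1) < 0`, so `λ := f (·, 0) / f (0, 1)` satisfies `λ y + r ≥ 0` for `(y, r) ∈ 𝒢`. This is
(i), since `0 ≤ G x y + λ y` holds iff `0 ≤ λ y + r` for every real `r ≥ G x y`.
-/

open Set

section Cone

variable {E : Type*} [AddCommGroup E] [Module ℝ E]

def nonnegMultiples (S : Set E) : Set E :=
  {z | ∃ t ∈ Ici (0 : ℝ), ∃ s ∈ S, z = t • s}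

lemma nonneg_of_mem_nonnegMultiples {S : Set E} {f : E →ₗ[ℝ] ℝ} (hf : ∀ s ∈ S, 0 ≤ f s)
    {z : E} (hz : z ∈ nonnegMultiples S) : 0 ≤ f z := by
  obtain ⟨t, ht, s, hs, rfl⟩ := hz
  simpa only [map_smul, smul_eq_mul] using mul_nonneg ht (hf s hs)

variable [TopologicalSpace E]

lemma nonneg_of_mem_closure_convexHull {S : Set E} {f : E →L[ℝ] ℝ} (hf : ∀ s ∈ S, 0 ≤ f s)
    {z : E} (hz : z ∈ closure (convexHull ℝ S)) : 0 ≤ f z :=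
  closure_minimal (convexHull_min hf ((convex_Ici 0).linear_preimage (f : E →ₗ[ℝ] ℝ)))
    (isClosed_Ici.preimage f.continuous) hz

lemma exists_nonpos_on_of_notMem_closure_convexHull_nonnegMultiples
    [IsTopologicalAddGroup E] [ContinuousSMul ℝ E] [LocallyConvexSpace ℝ E]
    {S : Set E} (hS : S.Nonempty) {a : E}
    (ha : a ∉ closure (convexHull ℝ (nonnegMultiples S))) :
    ∃ f : E →L[ℝ] ℝ, (∀ s ∈ S, f s ≤ 0) ∧ 0 < f a := by
  set C := closure (convexHull ℝ (nonnegMultiples S))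
  have hC : nonnegMultiples S ⊆ C := (subset_convexHull ℝ _).trans subset_closure
  obtain ⟨f, u, hfC, hua⟩ :=
    geometric_hahn_banach_closed_point (convex_convexHull ℝ _).closure isClosed_closure ha
  obtain ⟨s₀, hs₀⟩ := hS
  have hu : 0 < u := by simpa using hfC 0 (hC ⟨0, self_mem_Ici, s₀, hs₀, (zero_smul ℝ s₀).symm⟩)
  refine ⟨f, fun s hs => ?_, hu.trans hua⟩
  by_contra! hpos
  -- the multiple `(u / f s) • s` of `s` lies in `C` but `f` takes the value `u` on it
  have := hfC _ (hC ⟨u / f s, (div_pos hu hpos).le, s, hs, rfl⟩)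
  rw [map_smul, smul_eq_mul, div_mul_cancel₀ _ hpos.ne'] at this
  exact this.false

end Cone

theorem exists_nonneg_apply_fst_add_snd_iff {Y : Type*} [AddCommGroup Y] [Module ℝ Y]
    [TopologicalSpace Y] [IsTopologicalAddGroup Y] [ContinuousSMul ℝ Y]
    [LocallyConvexSpace ℝ Y] (S : Set (Y × ℝ)) :
    (∃ lam : Y →L[ℝ] ℝ, ∀ p ∈ S, 0 ≤ lam p.1 + p.2) ↔
      ((0 : Y), (-1 : ℝ)) ∉ closure (convexHull ℝ (nonnegMultiples S)) := by
  constructor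
  · rintro ⟨lam, hlam⟩ hmem
    set Φ : Y × ℝ →L[ℝ] ℝ := lam.comp (.fst ℝ Y ℝ) + .snd ℝ Y ℝ
    have := nonneg_of_mem_closure_convexHull
      (fun _ hz => nonneg_of_mem_nonnegMultiples (f := (Φ : Y × ℝ →ₗ[ℝ] ℝ)) hlam hz) hmem
    norm_num [Φ] at this
  · intro hmem
    rcases S.eq_empty_or_nonempty with rfl | hS
    · exact ⟨0, by simp⟩
    obtain ⟨f, hfS, hf⟩ := exists_nonpos_on_of_notMem_closure_convexHull_nonnegMultiples hS hmem
    set c := f (0, 1)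
    have hc : c < 0 := by
      have : f ((0 : Y), (-1 : ℝ)) = -c := by rw [← map_neg, Prod.neg_mk, neg_zero]
      linarith
    refine ⟨c⁻¹ • f.comp (.inl ℝ Y ℝ), fun p hp => ?_⟩
    have hfp : f p = f (p.1, 0) + p.2 * c := by
      conv_lhs => rw [show p = (p.1, 0) + p.2 • ((0 : Y), (1 : ℝ)) by ext <;> simp]
      rw [map_add, map_smul, smul_eq_mul]
    have : c⁻¹ * f (p.1, 0) + p.2 = c⁻¹ * f p := by
      rw [hfp, mul_add, mul_comm p.2, inv_mul_cancel_left₀ hc.ne]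
    simp only [FunLike.coe_smul, Pi.smul_apply, ContinuousLinearMap.comp_apply,
      ContinuousLinearMap.inl_apply, smul_eq_mul, this]
    exact mul_nonneg_of_nonpos_of_nonpos (inv_lt_zero.2 hc).le (hfS p hp)

lemma EReal.add_coe_nonneg_iff {g : EReal} {b : ℝ} :
    0 ≤ g + b ↔ ∀ r : ℝ, g ≤ r → 0 ≤ b + r := by
  induction g using EReal.rec with
  | bot => simpa using ⟨-b - 1, by linarith⟩
  | top => simp
  | coe g =>
    norm_cast
    exact ⟨fun h r hr => by linarith, fun h => by linarith [h g le_rfl]⟩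

theorem stmt_1_general {X : Type*} {Y : Type*} [AddCommGroup Y] [Module ℝ Y]
    [TopologicalSpace Y] [IsTopologicalAddGroup Y] [ContinuousSMul ℝ Y]
    [LocallyConvexSpace ℝ Y]
    (G : X → Y → EReal) :
    (∃ lam : Y →L[ℝ] ℝ, ∀ (x : X) (y : Y), 0 ≤ G x y + ((lam y : ℝ) : EReal)) ↔
      ((0 : Y), (-1 : ℝ)) ∉
        closure (convexHull ℝ
          {z : Y × ℝ | ∃ t ∈ Set.Ici (0 : ℝ),
            ∃ s ∈ {p : Y × ℝ | ∃ x : X, G x p.1 ≤ (p.2 : EReal)}, z = t • s}) := by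
  refine (exists_congr fun lam => ?_).trans (exists_nonneg_apply_fst_add_snd_iff _)
  simp only [EReal.add_coe_nonneg_iff, mem_ofPred_eq, Prod.forall, forall_exists_index]
  exact ⟨fun h y r x hr => h x y r hr, fun h x y r hr => h y r x hr⟩

/-- Lemma 2.2: dual characterization via separation. -/
theorem stmt_1 {X : Type*} {Y : Type*} [AddCommGroup Y] [Module ℝ Y]
    [TopologicalSpace Y] [IsTopologicalAddGroup Y] [ContinuousSMul ℝ Y]
    [LocallyConvexSpace ℝ Y] [T2Space Y]
    (G : X → Y → EReal) :
    (∃ lam : Y →L[ℝ] ℝ, ∀ (x : X) (y : Y), 0 ≤ G x y + ((lam y : ℝ) : EReal)) ↔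
      ((0 : Y), (-1 : ℝ)) ∉
        closure (convexHull ℝ
          {z : Y × ℝ | ∃ t ∈ Set.Ici (0 : ℝ),
            ∃ s ∈ {p : Y × ℝ | ∃ x : X, G x p.1 ≤ (p.2 : EReal)}, z = t • s}) :=
  stmt_1_general G
end

section
/- Let X be a set, Y a locally convex Hausdorff real topological vector space with dual Y*, and F : X × Y → ℝ ∪ {±∞}. Let ℱ = {(y,r) ∈ Y × ℝ : ∃ x ∈ X, F(x,y) ≤ r}. Then the following are equivalent: (i) the implication [∀ x ∈ X, F(x,0) ≥ 0] ⟹ [∃ λ̄ ∈ Y* with F(x,y) + ⟨λ̄,y⟩ ≥ 0 for all (x,y)] holds; (ii) ℝ₊ · ℱ is closed convex regarding {(0,-1)}, i.e. (cl co(ℝ₊ · ℱ)) ∩ {(0,-1)} = (ℝ₊ · ℱ) ∩ {(0,-1)}. -/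
/-!
Write `K = ℝ₊ · ℱ` and `p = (0, -1)`. Since `K` is a cone, `p ∈ K` exactly when `F x 0 < 0` for
some `x`, so (ii) says: if `F(·, 0) ≥ 0` then `p ∉ cl co K`. A continuous functional `f` on
`Y × ℝ` with `f p < 0 ≤ f` on `ℱ` has `f (0, 1) > 0`; normalised to `f (0, 1) = 1` it reads
`f (y, r) = λ y + r`, so such functionals are exactly the multipliers `λ` of (i). By Hahn–Banach
such an `f` exists iff `p ∉ cl co K`, which makes (i) and (ii) the same statement.
-/

open Set Pointwise

lemma Set.inter_singleton_eq_inter_singleton_iff {α : Type*} {A C : Set α} {p : α} (h : C ⊆ A) :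
    A ∩ {p} = C ∩ {p} ↔ (p ∈ A → p ∈ C) := by
  refine ⟨fun hAC hp => ?_, fun hp => ?_⟩
  · exact (hAC.subset (⟨hp, rfl⟩ : p ∈ A ∩ {p})).1
  · ext z
    simp only [mem_inter_iff, mem_singleton_iff]
    exact ⟨fun ⟨hz, hzp⟩ => ⟨hzp ▸ hp (hzp ▸ hz), hzp⟩, fun ⟨hz, hzp⟩ => ⟨h hz, hzp⟩⟩

lemma EReal.nonneg_add_coe_of_forall_le_coe {a : EReal} {c : ℝ}
    (h : ∀ r : ℝ, a ≤ r → 0 ≤ r + c) : 0 ≤ a + c := by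
  induction a using EReal.rec with
  | bot => linarith [h (-c - 1) bot_le]
  | coe a => exact_mod_cast h a le_rfl
  | top => simp

section NonnegCone

variable {E : Type*} [AddCommGroup E] [Module ℝ E] {S : Set E}

lemma setOf_exists_eq_smul_eq_Ici_smul (S : Set E) :
    {z : E | ∃ t ∈ Ici (0 : ℝ), ∃ s ∈ S, z = t • s} = Ici (0 : ℝ) • S := by
  ext z
  simp only [mem_ofPred_eq, mem_smul, eq_comm]

lemma zero_mem_Ici_smul (hS : S.Nonempty) : (0 : E) ∈ Ici (0 : ℝ) • S := by
  obtain ⟨s, hs⟩ := hS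
  simpa using smul_mem_smul (self_mem_Ici (a := (0 : ℝ))) hs

variable [TopologicalSpace E]

lemma notMem_closure_convexHull_Ici_smul {f : E →L[ℝ] ℝ} {p : E} (hp : f p < 0)
    (hS : ∀ w ∈ S, 0 ≤ f w) : p ∉ closure (convexHull ℝ (Ici (0 : ℝ) • S)) := by
  have hK : Ici (0 : ℝ) • S ⊆ {w | 0 ≤ f w} := by
    rintro _ ⟨t, ht, s, hs, rfl⟩
    simpa only [mem_ofPred_eq, map_smul, smul_eq_mul] using mul_nonneg ht (hS s hs)
  have hcl : closure (convexHull ℝ (Ici (0 : ℝ) • S)) ⊆ {w | 0 ≤ f w} :=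
    closure_minimal (convexHull_min hK (convex_halfSpace_ge f.isLinear 0))
      (isClosed_le continuous_const f.continuous)
  exact fun h => hp.not_ge (hcl h)

variable [IsTopologicalAddGroup E] [ContinuousSMul ℝ E] [LocallyConvexSpace ℝ E]

lemma exists_clm_neg_of_notMem_closure_convexHull_Ici_smul (hS : S.Nonempty) {p : E}
    (hp : p ∉ closure (convexHull ℝ (Ici (0 : ℝ) • S))) :
    ∃ f : E →L[ℝ] ℝ, f p < 0 ∧ ∀ w ∈ S, 0 ≤ f w := by
  obtain ⟨f, u, hpu, hu⟩ := geometric_hahn_banach_point_closed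
    (convex_convexHull ℝ _).closure isClosed_closure hp
  have hK : ∀ w ∈ Ici (0 : ℝ) • S, u < f w :=
    fun w hw => hu w (subset_closure (subset_convexHull ℝ _ hw))
  have hu0 : u < 0 := by simpa using hK 0 (zero_mem_Ici_smul hS)
  refine ⟨f, hpu.trans hu0, fun w hw => ?_⟩
  by_contra! hfw
  -- `(u / f w) • w` lies in the cone and on the level set `f = u`
  have := hK _ (smul_mem_smul (div_nonneg_of_nonpos hu0.le hfw.le) hw)
  simp [hfw.ne] at this

end NonnegCone

section Perturbation

variable {X Y : Type*} [AddCommGroup Y] [Module ℝ Y]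

def epigraphImage (F : X → Y → EReal) : Set (Y × ℝ) := {p | ∃ x, F x p.1 ≤ p.2}

lemma zero_neg_one_mem_Ici_smul_epigraphImage_iff (F : X → Y → EReal) :
    ((0 : Y), (-1 : ℝ)) ∈ Ici (0 : ℝ) • epigraphImage F ↔ ¬ ∀ x, 0 ≤ F x 0 := by
  push Not
  constructor
  · rintro ⟨t, ht, ⟨y, r⟩, ⟨x, hx⟩, heq⟩
    simp only [Prod.smul_mk, Prod.mk.injEq, smul_eq_mul] at heq
    have ht0 : t ≠ 0 := by rintro rfl; simp at heq
    have hy : y = 0 := (smul_eq_zero.1 heq.1).resolve_left ht0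
    have hr : r < 0 := by nlinarith [mem_Ici.1 ht]
    exact ⟨x, (hy ▸ hx).trans_lt (EReal.coe_lt_coe_iff.2 hr)⟩
  · rintro ⟨x, hx⟩
    obtain ⟨r, hxr, hr⟩ := EReal.lt_iff_exists_real_btwn.1 hx
    have hr : r < 0 := EReal.coe_lt_coe_iff.1 hr
    refine ⟨-r⁻¹, mem_Ici.2 (by simpa using hr.le), ((0 : Y), r), ⟨x, hxr.le⟩, ?_⟩
    simp [hr.ne]

variable [TopologicalSpace Y]

lemma exists_dual_iff_exists_clm (F : X → Y → EReal) :
    (∃ lam : Y →L[ℝ] ℝ, ∀ x y, 0 ≤ F x y + ((lam y : ℝ) : EReal)) ↔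
      ∃ f : Y × ℝ →L[ℝ] ℝ, f (0, -1) < 0 ∧ ∀ w ∈ epigraphImage F, 0 ≤ f w := by
  constructor
  · rintro ⟨lam, hlam⟩
    refine ⟨lam.comp (.fst ℝ Y ℝ) + .snd ℝ Y ℝ, by simp, ?_⟩
    rintro ⟨y, r⟩ ⟨x, hx⟩
    have : ((0 : ℝ) : EReal) ≤ ((r + lam y : ℝ) : EReal) := by
      rw [EReal.coe_add]
      exact (hlam x y).trans (add_le_add_left hx _)
    simpa [add_comm] using EReal.coe_le_coe_iff.1 this
  · rintro ⟨f, hp, hf⟩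
    set β := f ((0 : Y), (1 : ℝ))
    have hsplit : ∀ y (r : ℝ), f (y, r) = f (y, 0) + r * β := fun y r => by
      rw [show (y, r) = (y, (0 : ℝ)) + r • ((0 : Y), (1 : ℝ)) by simp, map_add, map_smul,
        smul_eq_mul]
    have hβ : 0 < β := by
      have := hsplit 0 (-1)
      simp only [Prod.mk_zero_zero, map_zero] at this
      linarith
    refine ⟨β⁻¹ • f.comp (.inl ℝ Y ℝ), fun x y => EReal.nonneg_add_coe_of_forall_le_coe ?_⟩
    intro r hr
    have h := hf (y, r) ⟨x, hr⟩
    rw [hsplit] at h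
    calc 0 ≤ β⁻¹ * (f (y, 0) + r * β) := mul_nonneg (inv_nonneg.2 hβ.le) h
      _ = r + (β⁻¹ • f.comp (.inl ℝ Y ℝ)) y := by
        simp only [smul_apply, ContinuousLinearMap.comp_apply,
          ContinuousLinearMap.inl_apply, smul_eq_mul]
        field_simp
        ring

variable [IsTopologicalAddGroup Y] [ContinuousSMul ℝ Y] [LocallyConvexSpace ℝ Y]

lemma notMem_closure_convexHull_iff_exists_dual (F : X → Y → EReal) :
    ((0 : Y), (-1 : ℝ)) ∉ closure (convexHull ℝ (Ici (0 : ℝ) • epigraphImage F)) ↔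
      ∃ lam : Y →L[ℝ] ℝ, ∀ x y, 0 ≤ F x y + ((lam y : ℝ) : EReal) := by
  rw [exists_dual_iff_exists_clm]
  constructor
  · intro hp
    rcases (epigraphImage F).eq_empty_or_nonempty with hF | hF
    · exact ⟨.snd ℝ Y ℝ, by simp, by simp [hF]⟩
    · exact exists_clm_neg_of_notMem_closure_convexHull_Ici_smul hF hp
  · rintro ⟨f, hp, hf⟩
    exact notMem_closure_convexHull_Ici_smul hp hf

end Perturbation

theorem stmt_4_general {X : Type*} {Y : Type*} [AddCommGroup Y] [Module ℝ Y]
    [TopologicalSpace Y] [IsTopologicalAddGroup Y] [ContinuousSMul ℝ Y]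
    [LocallyConvexSpace ℝ Y]
    (F : X → Y → EReal) :
    ((∀ x : X, 0 ≤ F x 0) →
        ∃ lam : Y →L[ℝ] ℝ, ∀ (x : X) (y : Y), 0 ≤ F x y + ((lam y : ℝ) : EReal)) ↔
      closure (convexHull ℝ
          {z : Y × ℝ | ∃ t ∈ Set.Ici (0 : ℝ),
            ∃ s ∈ {p : Y × ℝ | ∃ x : X, F x p.1 ≤ (p.2 : EReal)}, z = t • s}) ∩
          {((0 : Y), (-1 : ℝ))} =
        {z : Y × ℝ | ∃ t ∈ Set.Ici (0 : ℝ),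
            ∃ s ∈ {p : Y × ℝ | ∃ x : X, F x p.1 ≤ (p.2 : EReal)}, z = t • s} ∩
          {((0 : Y), (-1 : ℝ))} := by
  rw [setOf_exists_eq_smul_eq_Ici_smul]
  change _ ↔ closure (convexHull ℝ (Ici (0 : ℝ) • epigraphImage F)) ∩ _ =
    Ici (0 : ℝ) • epigraphImage F ∩ _
  rw [inter_singleton_eq_inter_singleton_iff ((subset_convexHull ℝ _).trans subset_closure),
    zero_neg_one_mem_Ici_smul_epigraphImage_iff, ← notMem_closure_convexHull_iff_exists_dual]
  exact imp_not_comm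

/-- Corollary 2.1: the `S_F`-procedure is valid iff `ℝ₊ · ℱ` is closed convex
regarding `{(0, -1)}`. -/
theorem stmt_4 {X : Type*} {Y : Type*} [AddCommGroup Y] [Module ℝ Y]
    [TopologicalSpace Y] [IsTopologicalAddGroup Y] [ContinuousSMul ℝ Y]
    [LocallyConvexSpace ℝ Y] [T2Space Y]
    (F : X → Y → EReal) :
    ((∀ x : X, 0 ≤ F x 0) →
        ∃ lam : Y →L[ℝ] ℝ, ∀ (x : X) (y : Y), 0 ≤ F x y + ((lam y : ℝ) : EReal)) ↔
      closure (convexHull ℝ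
          {z : Y × ℝ | ∃ t ∈ Set.Ici (0 : ℝ),
            ∃ s ∈ {p : Y × ℝ | ∃ x : X, F x p.1 ≤ (p.2 : EReal)}, z = t • s}) ∩
          {((0 : Y), (-1 : ℝ))} =
        {z : Y × ℝ | ∃ t ∈ Set.Ici (0 : ℝ),
            ∃ s ∈ {p : Y × ℝ | ∃ x : X, F x p.1 ≤ (p.2 : EReal)}, z = t • s} ∩
          {((0 : Y), (-1 : ℝ))} :=
  stmt_4_general F
end

section
/- Let X be a set, Y a locally convex Hausdorff real topological vector space, and F : X × Y → ℝ ∪ {±∞} such that the closure of ℝ₊ · ℱ is convex, where ℱ = {(y,r) : ∃ x, F(x,y) ≤ r}. Then the S_F-procedure is valid if and only if ℝ₊ · ℱ is closed regarding {(0,-1)}, i.e. cl(ℝ₊ · ℱ) ∩ {(0,-1)} = (ℝ₊ · ℱ) ∩ {(0,-1)}. -/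
/-!
Everything happens at the point `(0, -1)`: it lies in `ℝ₊ · ℱ` exactly when some `F x 0` is
negative, and a multiplier `λ` exists exactly when `ℱ` lies in a half-space
`{(y, r) | 0 ≤ λ y + r}`. Such a half-space is a closed cone, so it contains `cl (ℝ₊ · ℱ)`,
and it misses `(0, -1)`. Conversely, if `(0, -1) ∉ cl (ℝ₊ · ℱ)`, Hahn–Banach separates
this closed convex cone from the point by a functional that is nonnegative on `ℱ` and positive
at `(0, 1)`; rescaled, it gives `λ`.
-/

open Set

lemma EReal.exists_real_le_of_lt {a : EReal} {c : ℝ} (h : a < c) :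
    ∃ r : ℝ, a ≤ r ∧ r < c := by
  obtain ⟨b, hab, hbc⟩ := exists_between h
  lift b to ℝ using ⟨(hbc.trans (EReal.coe_lt_top c)).ne, (bot_le.trans_lt hab).ne'⟩
  exact ⟨b, hab.le, mod_cast hbc⟩

lemma closure_inter_singleton_eq_iff {α : Type*} [TopologicalSpace α] {s : Set α} {a : α} :
    closure s ∩ {a} = s ∩ {a} ↔ (a ∈ closure s → a ∈ s) := by
  simp only [Set.ext_iff, mem_inter_iff, mem_singleton_iff]
  exact ⟨fun h ha => ((h a).1 ⟨ha, rfl⟩).1,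
    fun h z => ⟨fun ⟨hz, hza⟩ => ⟨hza ▸ h (hza ▸ hz), hza⟩,
      fun ⟨hz, hza⟩ => ⟨subset_closure hz, hza⟩⟩⟩

def nonnegCone {E : Type*} [AddCommGroup E] [Module ℝ E] (S : Set E) : Set E :=
  {z | ∃ t ∈ Ici (0 : ℝ), ∃ s ∈ S, z = t • s}

/-- The paper's `ℱ`, the union of the epigraphs of the `F x`. -/
def epigraphUnion {X Y : Type*} (F : X → Y → EReal) : Set (Y × ℝ) :=
  {p | ∃ x, F x p.1 ≤ p.2}

section HalfSpace

variable {Y : Type*} [AddCommGroup Y] [Module ℝ Y] [TopologicalSpace Y]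

lemma nonnegCone_subset_halfSpace {S : Set (Y × ℝ)} {lam : Y →L[ℝ] ℝ}
    (hS : ∀ p ∈ S, 0 ≤ lam p.1 + p.2) :
    nonnegCone S ⊆ {p | 0 ≤ lam p.1 + p.2} := by
  rintro _ ⟨t, ht, p, hp, rfl⟩
  have : 0 ≤ t * (lam p.1 + p.2) := mul_nonneg ht (hS p hp)
  simpa [mul_add] using this

lemma notMem_closure_nonnegCone_of_halfSpace {S : Set (Y × ℝ)} {lam : Y →L[ℝ] ℝ}
    (hS : ∀ p ∈ S, 0 ≤ lam p.1 + p.2) :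
    ((0 : Y), (-1 : ℝ)) ∉ closure (nonnegCone S) := by
  have hclosed : IsClosed {p : Y × ℝ | 0 ≤ lam p.1 + p.2} :=
    isClosed_le continuous_const ((lam.continuous.comp continuous_fst).add continuous_snd)
  intro h
  have := closure_minimal (nonnegCone_subset_halfSpace hS) hclosed h
  norm_num at this

lemma ContinuousLinearMap.apply_prod_real (f : Y × ℝ →L[ℝ] ℝ) (y : Y) (r : ℝ) :
    f (y, r) = f (y, 0) + r * f (0, 1) := by
  conv_lhs => rw [show ((y, r) : Y × ℝ) = (y, 0) + r • (0, 1) by simp]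
  rw [map_add, map_smul, smul_eq_mul]

variable [IsTopologicalAddGroup Y] [ContinuousSMul ℝ Y] [LocallyConvexSpace ℝ Y]

lemma exists_halfSpace_of_notMem_closure_nonnegCone {S : Set (Y × ℝ)}
    (hconv : Convex ℝ (closure (nonnegCone S)))
    (h : ((0 : Y), (-1 : ℝ)) ∉ closure (nonnegCone S)) :
    ∃ lam : Y →L[ℝ] ℝ, ∀ p ∈ S, 0 ≤ lam p.1 + p.2 := by
  obtain ⟨f, u, hfu, hsep⟩ := geometric_hahn_banach_point_closed hconv isClosed_closure h
  have hcone : ∀ p ∈ S, ∀ t : ℝ, 0 ≤ t → u < t * f p := fun p hp t ht => by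
    simpa using hsep _ (subset_closure ⟨t, ht, p, hp, rfl⟩)
  set β := f (0, 1)
  refine ⟨β⁻¹ • f.comp (.inl ℝ Y ℝ), fun p hp => ?_⟩
  have hu : u < 0 := by simpa using hcone p hp 0 le_rfl
  have hβ : 0 < β := by
    have : f (0, -1) = -β := by rw [← map_neg]; simp
    linarith
  -- otherwise `t * f p` would fall below `u` for large `t`
  have hfp : 0 ≤ f p := by
    by_contra! hneg
    have := hcone p hp (u / f p) (div_nonneg_of_nonpos hu.le hneg.le)
    rw [div_mul_cancel₀ _ hneg.ne] at this
    exact lt_irrefl u this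
  rw [f.apply_prod_real] at hfp
  have : 0 ≤ β⁻¹ * (f (p.1, 0) + p.2 * β) := mul_nonneg (inv_nonneg.2 hβ.le) hfp
  simpa [mul_add, mul_comm p.2, hβ.ne'] using this

theorem exists_halfSpace_iff_notMem_closure_nonnegCone {S : Set (Y × ℝ)}
    (hconv : Convex ℝ (closure (nonnegCone S))) :
    (∃ lam : Y →L[ℝ] ℝ, ∀ p ∈ S, 0 ≤ lam p.1 + p.2) ↔
      ((0 : Y), (-1 : ℝ)) ∉ closure (nonnegCone S) :=
  ⟨fun ⟨_, hS⟩ => notMem_closure_nonnegCone_of_halfSpace hS,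
    exists_halfSpace_of_notMem_closure_nonnegCone hconv⟩

end HalfSpace

section Epigraph

variable {X Y : Type*}

lemma forall_nonneg_add_iff_epigraphUnion (F : X → Y → EReal) (lam : Y → ℝ) :
    (∀ x y, 0 ≤ F x y + (lam y : EReal)) ↔ ∀ p ∈ epigraphUnion F, 0 ≤ lam p.1 + p.2 := by
  constructor
  · rintro h ⟨y, r⟩ ⟨x, hxr⟩
    have : (0 : EReal) ≤ (lam y + r : ℝ) := by
      rw [EReal.coe_add, add_comm]; exact (h x y).trans (by gcongr)
    exact_mod_cast this
  · intro h x y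
    by_contra! hlt
    have hF : F x y < (-lam y : ℝ) := by
      rwa [EReal.coe_neg, ← zero_sub, EReal.lt_sub_iff_add_lt (.inl (EReal.coe_ne_bot _))
        (.inl (EReal.coe_ne_top _))]
    obtain ⟨r, hFr, hr⟩ := EReal.exists_real_le_of_lt hF
    linarith [h (y, r) ⟨x, hFr⟩]

variable [AddCommGroup Y] [Module ℝ Y]

lemma zero_neg_one_mem_nonnegCone_epigraphUnion_iff (F : X → Y → EReal) :
    ((0 : Y), (-1 : ℝ)) ∈ nonnegCone (epigraphUnion F) ↔ ∃ x, F x 0 < 0 := by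
  constructor
  · rintro ⟨t, ht, ⟨y, r⟩, ⟨x, hxr⟩, heq⟩
    simp only [Prod.ext_iff, Prod.smul_mk, smul_eq_mul] at heq
    obtain ⟨hy, hr⟩ := heq
    have ht0 : t ≠ 0 := by rintro rfl; norm_num at hr
    obtain rfl : y = 0 := (smul_eq_zero.1 hy.symm).resolve_left ht0
    have hrneg : r < 0 := by nlinarith [mem_Ici.1 ht]
    exact ⟨x, hxr.trans_lt (mod_cast hrneg)⟩
  · rintro ⟨x, hx⟩
    obtain ⟨r, hFr, hr⟩ := EReal.exists_real_le_of_lt hx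
    refine ⟨-r⁻¹, by simpa using hr.le, (0, r), ⟨x, hFr⟩, ?_⟩
    simp [hr.ne]

end Epigraph

theorem stmt_5_general {X : Type*} {Y : Type*} [AddCommGroup Y] [Module ℝ Y]
    [TopologicalSpace Y] [IsTopologicalAddGroup Y] [ContinuousSMul ℝ Y]
    [LocallyConvexSpace ℝ Y]
    (F : X → Y → EReal)
    (hconv : Convex ℝ (closure
      {z : Y × ℝ | ∃ t ∈ Set.Ici (0 : ℝ),
        ∃ s ∈ {p : Y × ℝ | ∃ x : X, F x p.1 ≤ (p.2 : EReal)}, z = t • s})) :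
    ((∀ x : X, 0 ≤ F x 0) →
        ∃ lam : Y →L[ℝ] ℝ, ∀ (x : X) (y : Y), 0 ≤ F x y + ((lam y : ℝ) : EReal)) ↔
      closure {z : Y × ℝ | ∃ t ∈ Set.Ici (0 : ℝ),
            ∃ s ∈ {p : Y × ℝ | ∃ x : X, F x p.1 ≤ (p.2 : EReal)}, z = t • s} ∩
          {((0 : Y), (-1 : ℝ))} =
        {z : Y × ℝ | ∃ t ∈ Set.Ici (0 : ℝ),
            ∃ s ∈ {p : Y × ℝ | ∃ x : X, F x p.1 ≤ (p.2 : EReal)}, z = t • s} ∩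
          {((0 : Y), (-1 : ℝ))} := by
  change _ ↔ closure (nonnegCone (epigraphUnion F)) ∩ _ = nonnegCone (epigraphUnion F) ∩ _
  change Convex ℝ (closure (nonnegCone (epigraphUnion F))) at hconv
  simp only [forall_nonneg_add_iff_epigraphUnion, closure_inter_singleton_eq_iff,
    zero_neg_one_mem_nonnegCone_epigraphUnion_iff]
  rw [exists_halfSpace_iff_notMem_closure_nonnegCone hconv]
  simp only [← not_le, ← not_forall]
  tauto

/-- Corollary 2.2: if the closure of `ℝ₊ · ℱ` is convex, the `S_F`-procedure is
valid iff `ℝ₊ · ℱ` is closed regarding `{(0, -1)}`. -/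
theorem stmt_5 {X : Type*} {Y : Type*} [AddCommGroup Y] [Module ℝ Y]
    [TopologicalSpace Y] [IsTopologicalAddGroup Y] [ContinuousSMul ℝ Y]
    [LocallyConvexSpace ℝ Y] [T2Space Y]
    (F : X → Y → EReal)
    (hconv : Convex ℝ (closure
      {z : Y × ℝ | ∃ t ∈ Set.Ici (0 : ℝ),
        ∃ s ∈ {p : Y × ℝ | ∃ x : X, F x p.1 ≤ (p.2 : EReal)}, z = t • s})) :
    ((∀ x : X, 0 ≤ F x 0) →
        ∃ lam : Y →L[ℝ] ℝ, ∀ (x : X) (y : Y), 0 ≤ F x y + ((lam y : ℝ) : EReal)) ↔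
      closure {z : Y × ℝ | ∃ t ∈ Set.Ici (0 : ℝ),
            ∃ s ∈ {p : Y × ℝ | ∃ x : X, F x p.1 ≤ (p.2 : EReal)}, z = t • s} ∩
          {((0 : Y), (-1 : ℝ))} =
        {z : Y × ℝ | ∃ t ∈ Set.Ici (0 : ℝ),
            ∃ s ∈ {p : Y × ℝ | ∃ x : X, F x p.1 ≤ (p.2 : EReal)}, z = t • s} ∩
          {((0 : Y), (-1 : ℝ))} :=
  stmt_5_general F hconv
end

section
/- Let X and Y be locally convex Hausdorff real topological vector spaces, U an index set, F_u : X × Y → ℝ ∪ {±∞} for u ∈ U. Define p(x) = sup_{u∈U} F_u(x,0) and q(x') = inf_{(u,μ)∈U×Y*} (F_u)*(x',μ) for x' ∈ X*. Then q*(x) = sup_{u∈U} (F_u)**(x,0) ≤ p(x) for all x ∈ X. -/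
/-!
The conjugate of an infimum is the supremum of the conjugates, so `q*(x)` is a supremum over
`x'`, `u` and `μ`; regrouping it as a supremum over `u` of one over `(x', μ)`, and using
`μ 0 = 0`, gives `sup_u (F_u)**(x, 0)`. The inequality is then the Fenchel–Young bound
`H** ≤ H` applied to each `F_u`.
-/

open scoped Classical

variable {X Y : Type*}
  [AddCommGroup X] [Module ℝ X] [TopologicalSpace X] [IsTopologicalAddGroup X]
  [ContinuousSMul ℝ X] [LocallyConvexSpace ℝ X] [T2Space X]
  [AddCommGroup Y] [Module ℝ Y] [TopologicalSpace Y] [IsTopologicalAddGroup Y]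
  [ContinuousSMul ℝ Y] [LocallyConvexSpace ℝ Y] [T2Space Y]

/-- Fenchel conjugate of `F : X × Y → ℝ̄` on `X* × Y*`. -/
noncomputable def fConj (F : X → Y → EReal) (x' : X →L[ℝ] ℝ) (y' : Y →L[ℝ] ℝ) : EReal :=
  ⨆ p : X × Y, (((x' p.1 + y' p.2 : ℝ) : EReal) - F p.1 p.2)

/-- Fenchel biconjugate of `F : X × Y → ℝ̄` on `X × Y`. -/
noncomputable def fBiconj (F : X → Y → EReal) (x : X) (y : Y) : EReal :=
  ⨆ q : (X →L[ℝ] ℝ) × (Y →L[ℝ] ℝ), (((q.1 x + q.2 y : ℝ) : EReal) - fConj F q.1 q.2)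

namespace EReal

theorem coe_sub_coe_sub_cancel (r : ℝ) (y : EReal) : (r : EReal) - (r - y) = y := by
  rw [sub_eq_add_neg (r : EReal) y, sub_add_cancel_left, neg_neg]

theorem coe_sub_le_comm (r : ℝ) {s t : EReal} :
    (r : EReal) - s ≤ t ↔ (r : EReal) - t ≤ s := by
  refine ⟨fun h => ?_, fun h => ?_⟩ <;>
    simpa only [coe_sub_coe_sub_cancel] using sub_le_sub (le_refl (r : EReal)) h

theorem coe_sub_iInf {ι : Sort*} (r : ℝ) (f : ι → EReal) :
    (r : EReal) - ⨅ i, f i = ⨆ i, ((r : EReal) - f i) := by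
  refine le_antisymm ?_ (iSup_le fun i => sub_le_sub le_rfl (iInf_le f i))
  rw [coe_sub_le_comm]
  exact le_iInf fun i => (coe_sub_le_comm r).1 (le_iSup (fun i => (r : EReal) - f i) i)

end EReal

section Conjugate

variable {E F : Type*} [AddCommGroup E] [Module ℝ E] [TopologicalSpace E]
  [AddCommGroup F] [Module ℝ F] [TopologicalSpace F]

theorem coe_sub_le_fConj (H : E → F → EReal) (x' : E →L[ℝ] ℝ) (y' : F →L[ℝ] ℝ) (x : E) (y : F) :
    ((x' x + y' y : ℝ) : EReal) - H x y ≤ fConj H x' y' :=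
  le_iSup (fun p : E × F => ((x' p.1 + y' p.2 : ℝ) : EReal) - H p.1 p.2) (x, y)

theorem fBiconj_le (H : E → F → EReal) (x : E) (y : F) : fBiconj H x y ≤ H x y :=
  iSup_le fun q => (EReal.coe_sub_le_comm _).1 (coe_sub_le_fConj H q.1 q.2 x y)

theorem fBiconj_zero (H : E → F → EReal) (x : E) :
    fBiconj H x 0 = ⨆ (x' : E →L[ℝ] ℝ) (y' : F →L[ℝ] ℝ), ((x' x : ℝ) : EReal) - fConj H x' y' := by
  simp only [fBiconj, map_zero, add_zero, iSup_prod]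

theorem iSup_coe_sub_iInf_fConj {U : Type*} (G : U → E → F → EReal) (x : E) :
    ⨆ x' : E →L[ℝ] ℝ, ((x' x : ℝ) : EReal) - ⨅ w : U × (F →L[ℝ] ℝ), fConj (G w.1) x' w.2 =
      ⨆ u, fBiconj (G u) x 0 := by
  simp only [EReal.coe_sub_iInf, iSup_prod, fBiconj_zero]
  exact iSup_comm

end Conjugate

/-- The paper's relations `q*(x) = sup_u (F_u)**(x,0) ≤ p(x)` for
`q(x') = inf_{(u,μ)} (F_u)*(x',μ)` and `p(x) = sup_u F_u(x,0)`. -/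
theorem stmt_8 {U : Type*} (F : U → X → Y → EReal)
    (q : (X →L[ℝ] ℝ) → EReal)
    (hq : q = fun x' => ⨅ w : U × (Y →L[ℝ] ℝ), fConj (F w.1) x' w.2) :
    ∀ x : X,
      (⨆ x' : X →L[ℝ] ℝ, (((x' x : ℝ) : EReal) - q x')) =
          (⨆ u : U, fBiconj (F u) x 0) ∧
        (⨆ x' : X →L[ℝ] ℝ, (((x' x : ℝ) : EReal) - q x')) ≤ ⨆ u : U, F u x 0 := by
  intro x
  subst hq
  have hconj := iSup_coe_sub_iInf_fConj F x
  exact ⟨hconj, hconj ▸ iSup_mono fun u => fBiconj_le (F u) x 0⟩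
end

section
/- Let X, Y be locally convex Hausdorff real topological vector spaces, U an index set, F_u : X × Y → ℝ ∪ {±∞}. Let ℱ^# = {(x',s) ∈ X* × ℝ : ∃ (u,μ) ∈ U × Y*, (F_u)*(x',μ) ≤ s} and q(x') = inf_{(u,μ)} (F_u)*(x',μ). Then the weak*-closed convex hull of ℱ^# is contained in epi q**, and epi q** ⊆ epi p* where p(x) = sup_{u} F_u(x,0). -/
/-!
`q**` is the supremum of the weak*-continuous affine functions `x' ↦ x' a - q* a`, so its
epigraph is weak*-closed and convex; it contains `ℱ^#` because `q** ≤ q ≤ (F_u)*(·, μ)`.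
Evaluating `(F_u)*(x', μ)` at `(a, 0)` gives `p* ≤ q`, hence `q* ≤ p` by Fenchel–Young, and
conjugating once more `p* ≤ q**`.
-/

variable {X Y : Type*}
  [AddCommGroup X] [Module ℝ X] [TopologicalSpace X] [IsTopologicalAddGroup X]
  [ContinuousSMul ℝ X] [LocallyConvexSpace ℝ X] [T2Space X]
  [AddCommGroup Y] [Module ℝ Y] [TopologicalSpace Y] [IsTopologicalAddGroup Y]
  [ContinuousSMul ℝ Y] [LocallyConvexSpace ℝ Y] [T2Space Y]

/-- Fenchel conjugate of `F : X × Y → ℝ̄`, with first dual variable in the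
weak* dual of `X`. -/
noncomputable def wConj (F : X → Y → EReal) (x' : WeakDual ℝ X) (y' : Y →L[ℝ] ℝ) : EReal :=
  ⨆ p : X × Y, (((x' p.1 + y' p.2 : ℝ) : EReal) - F p.1 p.2)

/-- Conjugate on `X` of a function defined on the weak* dual of `X`. -/
noncomputable def dConj (q : WeakDual ℝ X → EReal) (a : X) : EReal :=
  ⨆ x' : WeakDual ℝ X, (((x' a : ℝ) : EReal) - q x')

/-- Biconjugate (on the weak* dual again) of a function on the weak* dual. -/
noncomputable def dBiconj (q : WeakDual ℝ X → EReal) (x' : WeakDual ℝ X) : EReal :=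
  ⨆ a : X, (((x' a : ℝ) : EReal) - dConj q a)

theorem EReal.coe_sub_le_comm_s9 {a : ℝ} {u v : EReal} :
    (a : EReal) - u ≤ v ↔ (a : EReal) - v ≤ u := by
  induction u <;> induction v <;> simp [EReal.sub_top, ← EReal.coe_sub, add_comm]

theorem EReal.coe_sub_le_coe_iff {x y : ℝ} {c : EReal} :
    (x : EReal) - c ≤ y ↔ ((x - y : ℝ) : EReal) ≤ c := by
  rw [EReal.coe_sub_le_comm_s9, EReal.coe_sub]

theorem convex_setOf_coe_le {E : Type*} [AddCommGroup E] [Module ℝ E] (f : E →ₗ[ℝ] ℝ)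
    (c : EReal) : Convex ℝ {z | (f z : EReal) ≤ c} :=
  ((isLowerSet_Iic c).preimage EReal.coe_strictMono.monotone).ordConnected.convex.linear_preimage f

section WeakDualConjugates

variable {E G : Type*} [AddCommGroup E] [Module ℝ E] [TopologicalSpace E]

theorem isClosed_setOf_coe_le (f : E →L[ℝ] ℝ) (c : EReal) :
    IsClosed {z | (f z : EReal) ≤ c} :=
  isClosed_le (continuous_coe_real_ereal.comp f.continuous) continuous_const

/-- The epigraph of the affine function `x' ↦ x' a - c` is the sublevel set
`{z | evalSubSnd a z ≤ c}`. -/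
noncomputable def WeakDual.evalSubSnd (a : E) : WeakDual ℝ E × ℝ →L[ℝ] ℝ :=
  (WeakBilin.eval (topDualPairing ℝ E) a).comp (ContinuousLinearMap.fst ℝ (WeakDual ℝ E) ℝ) -
    ContinuousLinearMap.snd ℝ (WeakDual ℝ E) ℝ

@[simp]
theorem WeakDual.evalSubSnd_apply (a : E) (z : WeakDual ℝ E × ℝ) :
    WeakDual.evalSubSnd a z = z.1 a - z.2 :=
  rfl

theorem setOf_dBiconj_le_eq_iInter (q : WeakDual ℝ E → EReal) :
    {z : WeakDual ℝ E × ℝ | dBiconj q z.1 ≤ (z.2 : EReal)} =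
      ⋂ a : E, {z | (WeakDual.evalSubSnd a z : EReal) ≤ dConj q a} := by
  ext z
  simp only [dBiconj, iSup_le_iff, Set.mem_iInter, Set.mem_ofPred_eq, WeakDual.evalSubSnd_apply,
    EReal.coe_sub_le_coe_iff]

theorem isClosed_setOf_dBiconj_le (q : WeakDual ℝ E → EReal) :
    IsClosed {z : WeakDual ℝ E × ℝ | dBiconj q z.1 ≤ (z.2 : EReal)} := by
  rw [setOf_dBiconj_le_eq_iInter]
  exact isClosed_iInter fun a => isClosed_setOf_coe_le _ _

theorem convex_setOf_dBiconj_le (q : WeakDual ℝ E → EReal) :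
    Convex ℝ {z : WeakDual ℝ E × ℝ | dBiconj q z.1 ≤ (z.2 : EReal)} := by
  rw [setOf_dBiconj_le_eq_iInter]
  exact convex_iInter fun a => convex_setOf_coe_le (WeakDual.evalSubSnd a).toLinearMap _

theorem dBiconj_le_self (q : WeakDual ℝ E → EReal) (x' : WeakDual ℝ E) :
    dBiconj q x' ≤ q x' :=
  iSup_le fun a => EReal.coe_sub_le_comm_s9.1 <|
    le_iSup (fun y' : WeakDual ℝ E => ((y' a : ℝ) : EReal) - q y') x'

theorem dConj_le_of_forall_coe_sub_le {q : WeakDual ℝ E → EReal} {p : E → EReal}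
    (h : ∀ x' a, ((x' a : ℝ) : EReal) - p a ≤ q x') (a : E) : dConj q a ≤ p a :=
  iSup_le fun x' => EReal.coe_sub_le_comm_s9.1 (h x' a)

theorem iSup_coe_sub_le_dBiconj {q : WeakDual ℝ E → EReal} {p : E → EReal}
    (h : ∀ a, dConj q a ≤ p a) (x' : WeakDual ℝ E) :
    ⨆ a : E, ((x' a : ℝ) : EReal) - p a ≤ dBiconj q x' :=
  iSup_mono fun a => EReal.sub_le_sub le_rfl (h a)

theorem coe_sub_le_wConj [AddCommGroup G] [Module ℝ G] [TopologicalSpace G] (F : E → G → EReal)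
    (x' : WeakDual ℝ E) (μ : G →L[ℝ] ℝ) (a : E) :
    ((x' a : ℝ) : EReal) - F a 0 ≤ wConj F x' μ :=
  calc ((x' a : ℝ) : EReal) - F a 0 = ((x' a + μ 0 : ℝ) : EReal) - F a 0 := by
        rw [map_zero, add_zero]
    _ ≤ wConj F x' μ :=
      le_iSup (fun z : E × G => ((x' z.1 + μ z.2 : ℝ) : EReal) - F z.1 z.2) (a, 0)

theorem coe_sub_iSup_le_iInf_wConj [AddCommGroup G] [Module ℝ G] [TopologicalSpace G] {U : Type*}
    (F : U → E → G → EReal) (x' : WeakDual ℝ E) (a : E) :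
    ((x' a : ℝ) : EReal) - ⨆ u, F u a 0 ≤ ⨅ w : U × (G →L[ℝ] ℝ), wConj (F w.1) x' w.2 :=
  le_iInf fun w =>
    (EReal.sub_le_sub le_rfl (le_iSup (fun u => F u a 0) w.1)).trans (coe_sub_le_wConj _ x' w.2 a)

end WeakDualConjugates

/-- `cl co ℱ^# ⊆ epi q** ⊆ epi p*`. -/
theorem stmt_9 {U : Type*} (F : U → X → Y → EReal)
    (q : WeakDual ℝ X → EReal)
    (hq : q = fun x' => ⨅ w : U × (Y →L[ℝ] ℝ), wConj (F w.1) x' w.2)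
    (p : X → EReal) (hp : p = fun x => ⨆ u : U, F u x 0) :
    closure (convexHull ℝ
        {z : WeakDual ℝ X × ℝ | ∃ (u : U) (μ : Y →L[ℝ] ℝ), wConj (F u) z.1 μ ≤ (z.2 : EReal)}) ⊆
        {z : WeakDual ℝ X × ℝ | dBiconj q z.1 ≤ (z.2 : EReal)} ∧
      {z : WeakDual ℝ X × ℝ | dBiconj q z.1 ≤ (z.2 : EReal)} ⊆
        {z : WeakDual ℝ X × ℝ | (⨆ x : X, (((z.1 x : ℝ) : EReal) - p x)) ≤ (z.2 : EReal)} := by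
  have hq_le : ∀ u μ x', q x' ≤ wConj (F u) x' μ := by
    subst hq
    exact fun u μ x' => iInf_le (fun w : U × (Y →L[ℝ] ℝ) => wConj (F w.1) x' w.2) (u, μ)
  have hpq : ∀ x' a, ((x' a : ℝ) : EReal) - p a ≤ q x' := by
    subst hq hp
    exact coe_sub_iSup_le_iInf_wConj F
  refine ⟨closure_minimal (convexHull_min ?_ (convex_setOf_dBiconj_le q))
    (isClosed_setOf_dBiconj_le q), fun z hz => ?_⟩
  · rintro z ⟨u, μ, hz⟩
    exact (dBiconj_le_self q z.1).trans ((hq_le u μ z.1).trans hz)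
  · exact (iSup_coe_sub_le_dBiconj (dConj_le_of_forall_coe_sub_le hpq) z.1).trans hz
end

section
/- Let X, Y be locally convex Hausdorff real topological vector spaces, U an index set, and F_u : X × Y → ℝ ∪ {±∞} for u ∈ U. With ℱ^# = {(x',s) ∈ X* × ℝ : ∃(u,μ) ∈ U × Y*, (F_u)*(x',μ) ≤ s}, the following implications hold: (i) ⟹ (ii) ⟹ (iii), where (i) the robust S_{F_u}-procedure is valid; (ii) the robust S_{(F_u)**}-procedure is valid; (iii) ℱ^# is weak*-closed convex regarding {(0_{X*},0)}. -/
variable {X Y : Type*}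
  [AddCommGroup X] [Module ℝ X] [TopologicalSpace X] [IsTopologicalAddGroup X]
  [ContinuousSMul ℝ X] [LocallyConvexSpace ℝ X] [T2Space X]
  [AddCommGroup Y] [Module ℝ Y] [TopologicalSpace Y] [IsTopologicalAddGroup Y]
  [ContinuousSMul ℝ Y] [LocallyConvexSpace ℝ Y] [T2Space Y]

/-- Fenchel biconjugate of `F : X × Y → ℝ̄` on `X × Y`. -/
noncomputable def wBiconj (F : X → Y → EReal) (x : X) (y : Y) : EReal :=
  ⨆ w : WeakDual ℝ X × (Y →L[ℝ] ℝ), (((w.1 x + w.2 y : ℝ) : EReal) - wConj F w.1 w.2)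

/-- Validity of the robust `S_{G_u}`-procedure. -/
def robustValid {U : Type*} (G : U → X → Y → EReal) : Prop :=
  (∀ x : X, 0 ≤ ⨆ u : U, G u x 0) →
    ∃ (u : U) (lam : Y →L[ℝ] ℝ), ∀ (x : X) (y : Y), 0 ≤ G u x y + ((lam y : ℝ) : EReal)

/-!
(i) ⟹ (ii): `F_u** ≤ F_u`, so the premise for the biconjugates implies the one for `F_u`. A
certificate `(u, λ)` for `F_u` amounts to `F_u*(0, -λ) ≤ 0`, and `(F_u**)* ≤ F_u*`, so it is also
a certificate for `F_u**`.

(ii) ⟹ (iii): every `(x', s) ∈ ℱ^#` is the slope and height of an affine minorant of some `F_u`,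
hence of `F_u**`, so `x' x - s ≤ sup_u F_u**(x, 0)`. If `(0, 0)` lies in the weak*-closed convex
hull of `ℱ^#`, the closed half-spaces `{(x', s) | x' x - s ≤ t}` show that `sup_u F_u**(x, 0) ≥ 0`
for every `x`. Validity of the procedure for the biconjugates yields `(u, λ)` with
`F_u ≥ F_u** ≥ -λ`, i.e. `F_u*(0, -λ) ≤ 0`, which puts `(0, 0)` in `ℱ^#`.
-/

namespace EReal

lemma coe_sub_le_coe_iff_s11 {a c : ℝ} {b : EReal} :
    (a : EReal) - b ≤ c ↔ ((a - c : ℝ) : EReal) ≤ b := by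
  rw [sub_le_iff_le_add (.inr (coe_ne_top c)) (.inr (coe_ne_bot c)), coe_sub,
    sub_le_iff_le_add (.inl (coe_ne_bot c)) (.inl (coe_ne_top c)), add_comm]

lemma coe_sub_sub_cancel (a : ℝ) (b : EReal) : (a : EReal) - (a - b) = b := by
  induction b with
  | bot => simp
  | coe b => norm_cast; ring
  | top => simp

lemma zero_le_add_coe_iff {a : EReal} {c : ℝ} : 0 ≤ a + c ↔ ((-c : ℝ) : EReal) ≤ a := by
  rw [← zero_sub, coe_sub, coe_zero, sub_le_iff_le_add (.inl (coe_ne_bot c)) (.inl (coe_ne_top c))]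

end EReal

section Conjugate

variable {X Y : Type*} [AddCommGroup X] [Module ℝ X] [TopologicalSpace X]
  [AddCommGroup Y] [Module ℝ Y] [TopologicalSpace Y]

lemma wConj_le_coe_iff {F : X → Y → EReal} {x' : WeakDual ℝ X} {y' : Y →L[ℝ] ℝ} {c : ℝ} :
    wConj F x' y' ≤ c ↔ ∀ x y, ((x' x + y' y - c : ℝ) : EReal) ≤ F x y := by
  simp only [wConj, iSup_le_iff, Prod.forall, EReal.coe_sub_le_coe_iff_s11]

lemma wConj_zero_neg_le_zero_iff {F : X → Y → EReal} {lam : Y →L[ℝ] ℝ} :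
    wConj F 0 (-lam) ≤ 0 ↔ ∀ x y, 0 ≤ F x y + ((lam y : ℝ) : EReal) := by
  have hval : ∀ x y, (0 : WeakDual ℝ X) x + (-lam) y - 0 = -lam y := fun x y =>
    show 0 + -lam y - 0 = -lam y by ring
  refine (wConj_le_coe_iff (c := 0)).trans ?_
  simp only [hval, EReal.zero_le_add_coe_iff]

lemma wBiconj_le (F : X → Y → EReal) (x : X) (y : Y) : wBiconj F x y ≤ F x y :=
  iSup_le fun w =>
    calc ((w.1 x + w.2 y : ℝ) : EReal) - wConj F w.1 w.2
        ≤ ((w.1 x + w.2 y : ℝ) : EReal) - (((w.1 x + w.2 y : ℝ) : EReal) - F x y) :=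
          EReal.sub_le_sub le_rfl (le_iSup (fun p : X × Y =>
            ((w.1 p.1 + w.2 p.2 : ℝ) : EReal) - F p.1 p.2) (x, y))
      _ = F x y := EReal.coe_sub_sub_cancel _ _

lemma wConj_wBiconj_le (F : X → Y → EReal) (x' : WeakDual ℝ X) (y' : Y →L[ℝ] ℝ) :
    wConj (wBiconj F) x' y' ≤ wConj F x' y' :=
  iSup_le fun p =>
    calc ((x' p.1 + y' p.2 : ℝ) : EReal) - wBiconj F p.1 p.2
        ≤ ((x' p.1 + y' p.2 : ℝ) : EReal) - (((x' p.1 + y' p.2 : ℝ) : EReal) - wConj F x' y') :=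
          EReal.sub_le_sub le_rfl (le_iSup (fun w : WeakDual ℝ X × (Y →L[ℝ] ℝ) =>
            ((w.1 p.1 + w.2 p.2 : ℝ) : EReal) - wConj F w.1 w.2) (x', y'))
      _ = wConj F x' y' := EReal.coe_sub_sub_cancel _ _

lemma le_wBiconj_of_wConj_le {F : X → Y → EReal} {x' : WeakDual ℝ X} {y' : Y →L[ℝ] ℝ} {c : ℝ}
    (h : wConj F x' y' ≤ c) (x : X) (y : Y) :
    ((x' x + y' y - c : ℝ) : EReal) ≤ wBiconj F x y :=
  calc ((x' x + y' y - c : ℝ) : EReal) = ((x' x + y' y : ℝ) : EReal) - c := EReal.coe_sub _ _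
    _ ≤ ((x' x + y' y : ℝ) : EReal) - wConj F x' y' := EReal.sub_le_sub le_rfl h
    _ ≤ wBiconj F x y := le_iSup (fun w : WeakDual ℝ X × (Y →L[ℝ] ℝ) =>
        ((w.1 x + w.2 y : ℝ) : EReal) - wConj F w.1 w.2) (x', y')

lemma closure_convexHull_subset_setOf_apply_sub_le {S : Set (WeakDual ℝ X × ℝ)} {x : X} {t : ℝ}
    (hS : S ⊆ {z | z.1 x - z.2 ≤ t}) : closure (convexHull ℝ S) ⊆ {z | z.1 x - z.2 ≤ t} := by
  have hlin : IsLinearMap ℝ fun z : WeakDual ℝ X × ℝ => z.1 x - z.2 :=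
    ⟨fun z w => show z.1 x + w.1 x - (z.2 + w.2) = z.1 x - z.2 + (w.1 x - w.2) by ring,
      fun a z => show a * z.1 x - a * z.2 = a * (z.1 x - z.2) by ring⟩
  have hcont : Continuous fun z : WeakDual ℝ X × ℝ => z.1 x - z.2 :=
    ((WeakDual.eval_continuous x).comp continuous_fst).sub continuous_snd
  exact closure_minimal (convexHull_min hS (convex_halfSpace_le hlin t))
    (isClosed_le hcont continuous_const)

variable {U : Type*}

/-- The set `ℱ^#` of the paper. -/
def conjEpigraphUnion (F : U → X → Y → EReal) : Set (WeakDual ℝ X × ℝ) :=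
  {z | ∃ (u : U) (μ : Y →L[ℝ] ℝ), wConj (F u) z.1 μ ≤ (z.2 : EReal)}

lemma robustValid_wBiconj_of_robustValid {F : U → X → Y → EReal} (hF : robustValid F) :
    robustValid fun u => wBiconj (F u) := by
  intro hpremise
  obtain ⟨u, lam, hlam⟩ :=
    hF fun x => (hpremise x).trans (iSup_mono fun u => wBiconj_le (F u) x 0)
  exact ⟨u, lam, wConj_zero_neg_le_zero_iff.1
    ((wConj_wBiconj_le _ _ _).trans (wConj_zero_neg_le_zero_iff.2 hlam))⟩

lemma apply_sub_le_iSup_wBiconj {F : U → X → Y → EReal} {z : WeakDual ℝ X × ℝ}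
    (hz : z ∈ conjEpigraphUnion F) (x : X) :
    ((z.1 x - z.2 : ℝ) : EReal) ≤ ⨆ u, wBiconj (F u) x 0 := by
  obtain ⟨u, μ, hu⟩ := hz
  calc ((z.1 x - z.2 : ℝ) : EReal) = ((z.1 x + μ 0 - z.2 : ℝ) : EReal) := by simp
    _ ≤ wBiconj (F u) x 0 := le_wBiconj_of_wConj_le hu x 0
    _ ≤ ⨆ u, wBiconj (F u) x 0 := le_iSup (fun u => wBiconj (F u) x 0) u

lemma iSup_wBiconj_nonneg_of_mem_closure {F : U → X → Y → EReal}
    (h0 : (0, 0) ∈ closure (convexHull ℝ (conjEpigraphUnion F))) (x : X) :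
    0 ≤ ⨆ u, wBiconj (F u) x 0 := by
  by_contra! hneg
  obtain ⟨t, hsup_t, ht⟩ := EReal.lt_iff_exists_real_btwn.1 hneg
  have hS : conjEpigraphUnion F ⊆ {z | z.1 x - z.2 ≤ t} := fun z hz =>
    EReal.coe_le_coe_iff.1 ((apply_sub_le_iSup_wBiconj hz x).trans hsup_t.le)
  have h0t : (0 : ℝ) - 0 ≤ t := closure_convexHull_subset_setOf_apply_sub_le hS h0
  rw [sub_zero] at h0t
  exact (EReal.coe_nonneg.2 h0t).not_gt ht

lemma zero_mem_conjEpigraphUnion {F : U → X → Y → EReal}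
    (hF : robustValid fun u => wBiconj (F u))
    (h0 : (0, 0) ∈ closure (convexHull ℝ (conjEpigraphUnion F))) :
    (0, 0) ∈ conjEpigraphUnion F := by
  obtain ⟨u, lam, hlam⟩ := hF (iSup_wBiconj_nonneg_of_mem_closure h0)
  exact ⟨u, -lam, wConj_zero_neg_le_zero_iff.2 fun x y =>
    (hlam x y).trans (by gcongr; exact wBiconj_le _ x y)⟩

end Conjugate

/-- Theorem 3.1, implications (i) ⟹ (ii) ⟹ (iii). -/
theorem stmt_11 {U : Type*} (F : U → X → Y → EReal) :
    (robustValid F → robustValid (fun u => wBiconj (F u))) ∧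
      (robustValid (fun u => wBiconj (F u)) →
        closure (convexHull ℝ
            {z : WeakDual ℝ X × ℝ | ∃ (u : U) (μ : Y →L[ℝ] ℝ),
              wConj (F u) z.1 μ ≤ (z.2 : EReal)}) ∩
            {((0 : WeakDual ℝ X), (0 : ℝ))} =
          {z : WeakDual ℝ X × ℝ | ∃ (u : U) (μ : Y →L[ℝ] ℝ),
              wConj (F u) z.1 μ ≤ (z.2 : EReal)} ∩
            {((0 : WeakDual ℝ X), (0 : ℝ))}) := by
  refine ⟨robustValid_wBiconj_of_robustValid, fun hF => ?_⟩
  refine Set.Subset.antisymm ?_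
    (Set.inter_subset_inter_left _ ((subset_convexHull ℝ _).trans subset_closure))
  rintro z ⟨hz, rfl⟩
  exact ⟨zero_mem_conjEpigraphUnion hF hz, rfl⟩
end

section
/- Let X, Y be locally convex Hausdorff real topological vector spaces, U an index set, F_u : X × Y → ℝ ∪ {±∞}. Assume (H₁): inf_{x∈X} sup_{u∈U} F_u(x,0) = inf_{x∈X} sup_{u∈U} (F_u)**(x,0) ≠ +∞. Then the robust S_{F_u}-procedure is valid if and only if ℱ^# = {(x',s) : ∃(u,μ) ∈ U×Y*, (F_u)*(x',μ) ≤ s} is weak*-closed convex regarding {(0_{X*},0)}. -/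
/-!
Write `A` for `ℱ^#`. Its conjugate `x ↦ sup_{(x', s) ∈ A} (x' x - s)` is exactly
`x ↦ sup_u (F u)**(x, 0)`, and `(0, 0) ∈ A` is exactly the conclusion of the S-procedure
(with `λ = -μ`). By (H₁) the premise of the S-procedure is therefore equivalent to the
nonnegativity of the conjugate of `A`. Since `A` is upward closed in `s` and its conjugate is
finite somewhere, `(0, 0)` lies in the weak*-closed convex hull of `A` iff that conjugate is
nonnegative: one way through the closed half-spaces `x' x - s ≤ c`, the other by separating
`(0, 0)` from the hull by a functional `(x', s) ↦ x' x₀ + c s` (continuous functionals on the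
weak* dual are evaluations) and homogenizing.
-/

variable {X Y : Type*}
  [AddCommGroup X] [Module ℝ X] [TopologicalSpace X] [IsTopologicalAddGroup X]
  [ContinuousSMul ℝ X] [LocallyConvexSpace ℝ X] [T2Space X]
  [AddCommGroup Y] [Module ℝ Y] [TopologicalSpace Y] [IsTopologicalAddGroup Y]
  [ContinuousSMul ℝ Y] [LocallyConvexSpace ℝ Y] [T2Space Y]

theorem Set.inter_singleton_eq_inter_singleton_iff_s12 {α : Type*} {s t : Set α} (hst : s ⊆ t)
    {a : α} : t ∩ {a} = s ∩ {a} ↔ (a ∈ t → a ∈ s) := by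
  refine ⟨fun h ha => ((h ▸ ⟨ha, rfl⟩ : a ∈ s ∩ {a})).1, fun h => ?_⟩
  ext z
  constructor
  · rintro ⟨hz, rfl⟩
    exact ⟨h hz, rfl⟩
  · rintro ⟨hz, rfl⟩
    exact ⟨hst hz, rfl⟩

theorem EReal.coe_neg_le_iff (a : ℝ) (b : EReal) : ((-a : ℝ) : EReal) ≤ b ↔ 0 ≤ b + a := by
  rw [← EReal.sub_le_iff_le_add (by simp) (by simp)]
  simp [sub_eq_add_neg]

theorem EReal.coe_sub_le_of_forall_le_coe {a : ℝ} {b g : EReal}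
    (h : ∀ s : ℝ, b ≤ s → ((a - s : ℝ) : EReal) ≤ g) : (a : EReal) - b ≤ g := by
  induction b using EReal.rec with
  | bot =>
    rw [EReal.coe_sub_bot, top_le_iff, EReal.eq_top_iff_forall_lt]
    intro y
    calc (y : EReal) < ((a - (a - y - 1) : ℝ) : EReal) := by norm_cast; linarith
      _ ≤ g := h _ bot_le
  | coe b => exact_mod_cast h b le_rfl
  | top => simp

section WeakDual

variable {V : Type*} [AddCommGroup V] [Module ℝ V] [TopologicalSpace V]

instance : LocallyConvexSpace ℝ (WeakDual ℝ V) := WeakBilin.locallyConvexSpace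

theorem WeakDual.exists_eq_eval (g : WeakDual ℝ V →L[ℝ] ℝ) :
    ∃ x : V, ∀ x' : WeakDual ℝ V, g x' = x' x := by
  obtain ⟨x, hx⟩ := LinearMap.dualEmbedding_surjective (topDualPairing ℝ V) g
  exact ⟨x, fun x' => by rw [← hx]; rfl⟩

theorem WeakDual.exists_prod_eq_eval (f : WeakDual ℝ V × ℝ →L[ℝ] ℝ) :
    ∃ (x : V) (c : ℝ), ∀ z : WeakDual ℝ V × ℝ, f z = z.1 x + c * z.2 := by
  obtain ⟨x, hx⟩ := exists_eq_eval (f.comp (.inl ℝ _ ℝ))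
  refine ⟨x, f (0, 1), fun z => ?_⟩
  calc f z = f (z.1, 0) + f (z.2 • ((0 : WeakDual ℝ V), (1 : ℝ))) := by
        rw [← map_add, Prod.smul_mk, smul_zero, smul_eq_mul, mul_one, Prod.mk_add_mk, add_zero,
          zero_add]
    _ = z.1 x + f (0, 1) * z.2 := by rw [map_smul, ← hx, smul_eq_mul, mul_comm]; rfl

/-- For `A` the epigraph of `φ : V* → ℝ̄`, this is the conjugate `φ* x = sup (x' x - φ x')`. -/
noncomputable def epiConj (A : Set (WeakDual ℝ V × ℝ)) (x : V) : EReal :=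
  ⨆ z ∈ A, ((z.1 x - z.2 : ℝ) : EReal)

theorem coe_le_epiConj {A : Set (WeakDual ℝ V × ℝ)} {z : WeakDual ℝ V × ℝ} (hz : z ∈ A) (x : V) :
    ((z.1 x - z.2 : ℝ) : EReal) ≤ epiConj A x :=
  le_iSup₂ (f := fun z _ => ((z.1 x - z.2 : ℝ) : EReal)) z hz

theorem epiConj_le_coe {A : Set (WeakDual ℝ V × ℝ)} {x : V} {r : ℝ}
    (h : ∀ z ∈ A, z.1 x - z.2 ≤ r) : epiConj A x ≤ r :=
  iSup₂_le fun z hz => EReal.coe_le_coe_iff.mpr (h z hz)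

theorem epiConj_nonneg_of_zero_mem_closure {A : Set (WeakDual ℝ V × ℝ)}
    (h0 : (0 : WeakDual ℝ V × ℝ) ∈ closure (convexHull ℝ A)) (x : V) : 0 ≤ epiConj A x := by
  by_contra! hneg
  obtain ⟨c, hAc, hc⟩ := EReal.exists_between_coe_real hneg
  let ℓ : WeakDual ℝ V × ℝ →L[ℝ] ℝ :=
    (WeakBilin.eval (topDualPairing ℝ V) x : WeakDual ℝ V →L[ℝ] ℝ).comp
      (.fst ℝ (WeakDual ℝ V) ℝ) - .snd ℝ _ ℝ
  have hA : A ⊆ ℓ ⁻¹' Set.Iic c := fun z hz =>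
    EReal.coe_le_coe_iff.mp ((coe_le_epiConj hz x).trans hAc.le)
  have hclosure : closure (convexHull ℝ A) ⊆ ℓ ⁻¹' Set.Iic c :=
    closure_minimal (convexHull_min hA ((convex_Iic c).linear_preimage ℓ.toLinearMap))
      (isClosed_Iic.preimage ℓ.continuous)
  have : (0 : ℝ) ≤ c := by simpa using hclosure h0
  exact absurd hc (by exact_mod_cast this.not_gt)

theorem nonneg_of_forall_lt_add_mul {β a c s₀ : ℝ} (h : ∀ s, s₀ ≤ s → β < a + c * s) : 0 ≤ c := by
  by_contra! hc
  have := h (max s₀ ((β - a) / c)) (le_max_left _ _)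
  have : c * max s₀ ((β - a) / c) ≤ c * ((β - a) / c) :=
    mul_le_mul_of_nonpos_left (le_max_right _ _) hc.le
  rw [mul_div_cancel₀ _ hc.ne] at this
  linarith

theorem zero_mem_closure_convexHull_of_epiConj_nonneg {A : Set (WeakDual ℝ V × ℝ)}
    (hA : ∀ z ∈ A, ∀ s, z.2 ≤ s → (z.1, s) ∈ A) {x₁ : V} (hx₁ : epiConj A x₁ ≠ ⊤)
    (hnonneg : ∀ x, 0 ≤ epiConj A x) : (0 : WeakDual ℝ V × ℝ) ∈ closure (convexHull ℝ A) := by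
  by_contra h0
  obtain ⟨f, β, hf0, hfA⟩ :=
    geometric_hahn_banach_point_closed (convex_convexHull ℝ A).closure isClosed_closure h0
  obtain ⟨x₀, c, hf⟩ := WeakDual.exists_prod_eq_eval f
  rw [map_zero] at hf0
  have hsep : ∀ z ∈ A, β < z.1 x₀ + c * z.2 := fun z hz =>
    hf z ▸ hfA z (subset_closure (subset_convexHull ℝ A hz))
  obtain ⟨z₀, hz₀⟩ : A.Nonempty := by
    by_contra! hempty
    simpa [epiConj, hempty] using hnonneg x₁
  have hc : 0 ≤ c :=
    nonneg_of_forall_lt_add_mul (a := z₀.1 x₀) fun s hs => hsep _ (hA z₀ hz₀ s hs)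
  set M := (epiConj A x₁).toReal
  have hM : ∀ z ∈ A, z.1 x₁ - z.2 ≤ M := fun z hz => by
    rw [← EReal.coe_le_coe_iff, EReal.coe_toReal hx₁ (ne_bot_of_le_ne_bot EReal.zero_ne_bot
      (hnonneg x₁))]
    exact coe_le_epiConj hz x₁
  -- Witness: for `z ∈ A`, `z.1 x - z.2 = ((z.1 x₁ - z.2) - t f z) / D ≤ (M - t β) / D < 0`
  -- at `x = D⁻¹ (x₁ - t x₀)`.
  set t := (max M 0 + 1) / β
  have htβ : M < t * β := by
    rw [div_mul_cancel₀ _ hf0.ne']; linarith [le_max_left M 0]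
  have ht : 0 ≤ t := div_nonneg (by linarith [le_max_right M 0]) hf0.le
  set D := 1 + t * c
  have hD : 0 < D := by positivity
  have hneg : epiConj A (D⁻¹ • (x₁ - t • x₀)) ≤ ((M - t * β) / D : ℝ) := by
    refine epiConj_le_coe fun z hz => ?_
    have hz' : z.1 (D⁻¹ • (x₁ - t • x₀)) - z.2 =
        ((z.1 x₁ - z.2) - t * (z.1 x₀ + c * z.2)) / D := by
      simp only [map_smul, map_sub, smul_eq_mul]
      field_simp
      ring
    rw [hz']
    gcongr
    · exact hM z hz
    · exact (hsep z hz).le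
  have := (hnonneg _).trans hneg
  norm_cast at this
  exact absurd this (not_le.mpr (div_neg_of_neg_of_pos (by linarith) hD))

end WeakDual

section FSharp

variable {V W : Type*} [AddCommGroup V] [Module ℝ V] [TopologicalSpace V]
  [AddCommGroup W] [Module ℝ W] [TopologicalSpace W]

theorem wConj_zero_neg_nonpos_iff (F : V → W → EReal) (lam : W →L[ℝ] ℝ) :
    wConj F 0 (-lam) ≤ 0 ↔ ∀ x y, 0 ≤ F x y + ((lam y : ℝ) : EReal) := by
  simp only [wConj, iSup_le_iff, Prod.forall, EReal.sub_nonpos]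
  refine forall₂_congr fun x y => ?_
  rw [← EReal.coe_neg_le_iff]
  congr! 2
  exact zero_add _

/-- The set `ℱ^#` of the paper: the union over `u` of the projections of `epi (F u)*`
to `V* × ℝ`. -/
def fSharp {U : Type*} (F : U → V → W → EReal) : Set (WeakDual ℝ V × ℝ) :=
  {z | ∃ (u : U) (μ : W →L[ℝ] ℝ), wConj (F u) z.1 μ ≤ (z.2 : EReal)}

variable {U : Type*} (F : U → V → W → EReal)

theorem fSharp_mk_mem_of_le {z : WeakDual ℝ V × ℝ} (hz : z ∈ fSharp F) {s : ℝ} (hs : z.2 ≤ s) :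
    (z.1, s) ∈ fSharp F := by
  obtain ⟨u, μ, h⟩ := hz
  exact ⟨u, μ, h.trans (EReal.coe_le_coe_iff.mpr hs)⟩

theorem zero_mem_fSharp_iff :
    (0 : WeakDual ℝ V × ℝ) ∈ fSharp F ↔
      ∃ (u : U) (lam : W →L[ℝ] ℝ), ∀ x y, 0 ≤ F u x y + ((lam y : ℝ) : EReal) := by
  refine ⟨fun ⟨u, μ, h⟩ => ⟨u, -μ, ?_⟩, fun ⟨u, lam, h⟩ => ⟨u, -lam, ?_⟩⟩
  · rw [← wConj_zero_neg_nonpos_iff, neg_neg]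
    exact_mod_cast h
  · exact_mod_cast (wConj_zero_neg_nonpos_iff (F u) lam).mpr h

theorem epiConj_fSharp (x : V) : epiConj (fSharp F) x = ⨆ u, wBiconj (F u) x 0 := by
  apply le_antisymm
  · refine iSup₂_le fun z ⟨u, μ, hμ⟩ => le_iSup_of_le u ?_
    calc ((z.1 x - z.2 : ℝ) : EReal) = ((z.1 x + μ 0 : ℝ) : EReal) - z.2 := by simp
      _ ≤ ((z.1 x + μ 0 : ℝ) : EReal) - wConj (F u) z.1 μ := EReal.sub_le_sub le_rfl hμ
      _ ≤ wBiconj (F u) x 0 :=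
        le_iSup (fun w : WeakDual ℝ V × (W →L[ℝ] ℝ) =>
          ((w.1 x + w.2 0 : ℝ) : EReal) - wConj (F u) w.1 w.2) (z.1, μ)
  · refine iSup_le fun u => iSup_le fun w => EReal.coe_sub_le_of_forall_le_coe fun s hs => ?_
    simpa using coe_le_epiConj (A := fSharp F) (z := (w.1, s)) ⟨u, w.2, hs⟩ x

end FSharp

/-- Theorem 3.1 under hypothesis `(H₁)`: the robust `S_{F_u}`-procedure is valid
iff `ℱ^#` is weak*-closed convex regarding `{(0, 0)}`. -/
theorem stmt_12 {U : Type*} (F : U → X → Y → EReal)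
    (H1 : (⨅ x : X, ⨆ u : U, F u x 0) = (⨅ x : X, ⨆ u : U, wBiconj (F u) x 0) ∧
      (⨅ x : X, ⨆ u : U, F u x 0) ≠ ⊤) :
    ((∀ x : X, 0 ≤ ⨆ u : U, F u x 0) →
        ∃ (u : U) (lam : Y →L[ℝ] ℝ),
          ∀ (x : X) (y : Y), 0 ≤ F u x y + ((lam y : ℝ) : EReal)) ↔
      closure (convexHull ℝ
          {z : WeakDual ℝ X × ℝ | ∃ (u : U) (μ : Y →L[ℝ] ℝ),
            wConj (F u) z.1 μ ≤ (z.2 : EReal)}) ∩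
          {((0 : WeakDual ℝ X), (0 : ℝ))} =
        {z : WeakDual ℝ X × ℝ | ∃ (u : U) (μ : Y →L[ℝ] ℝ),
            wConj (F u) z.1 μ ≤ (z.2 : EReal)} ∩
          {((0 : WeakDual ℝ X), (0 : ℝ))} := by
  obtain ⟨hinf, hfin⟩ := H1
  change _ ↔ closure (convexHull ℝ (fSharp F)) ∩ {0} = fSharp F ∩ {0}
  rw [Set.inter_singleton_eq_inter_singleton_iff_s12 ((subset_convexHull ℝ _).trans subset_closure),
    ← zero_mem_fSharp_iff]
  have hpos_iff : (∀ x, 0 ≤ ⨆ u, F u x 0) ↔ ∀ x, 0 ≤ epiConj (fSharp F) x := by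
    simp only [epiConj_fSharp, ← le_iInf_iff, hinf]
  obtain ⟨x₁, hx₁⟩ : ∃ x, epiConj (fSharp F) x ≠ ⊤ := by
    simpa only [hinf, epiConj_fSharp, ne_eq, iInf_eq_top, not_forall] using hfin
  refine ⟨fun hvalid h0 => hvalid (hpos_iff.2 (epiConj_nonneg_of_zero_mem_closure h0)),
    fun hclosed hpos => hclosed ?_⟩
  exact zero_mem_closure_convexHull_of_epiConj_nonneg (fun z hz _ => fSharp_mk_mem_of_le F hz) hx₁
    (hpos_iff.1 hpos)
end

section
/- Let X, Y be locally convex Hausdorff real topological vector spaces, U an index set, F_u : X × Y → ℝ ∪ {±∞} for u ∈ U, and h : X → ℝ ∪ {+∞} proper, convex, lower semicontinuous. If for every a' ∈ dom h* there exist ū ∈ U and μ̄ ∈ Y* with (F_ū)*(a',μ̄) ≤ h*(a'), then sup_{u∈U} F_u(x,0) ≥ h(x) for all x ∈ X. -/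
/-!
A proper convex lower semicontinuous `h` is the supremum of its continuous affine minorants
`y ↦ φ y - r` (Fenchel–Moreau): a real level `c < h x` is separated from the closed convex
epigraph by a closed hyperplane, which can be vertical only when `h x = ⊤`; a vertical one is
tilted by adding a large multiple of it to a non-vertical one obtained at a point of `dom h`.
Each such minorant has `h* φ ≤ r < ⊤`, so the hypothesis yields `u` and `μ` with
`F_u* (φ, μ) ≤ r`, whence `φ x - r ≤ F_u (x, 0)`.
-/

variable {X Y : Type*}
  [AddCommGroup X] [Module ℝ X] [TopologicalSpace X] [IsTopologicalAddGroup X]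
  [ContinuousSMul ℝ X] [LocallyConvexSpace ℝ X] [T2Space X]
  [AddCommGroup Y] [Module ℝ Y] [TopologicalSpace Y] [IsTopologicalAddGroup Y]
  [ContinuousSMul ℝ Y] [LocallyConvexSpace ℝ Y] [T2Space Y]

/-- Fenchel conjugate of `h : X → ℝ ∪ {+∞}` on the weak* dual of `X`. -/
noncomputable def hConj (h : X → EReal) (a' : WeakDual ℝ X) : EReal :=
  ⨆ x : X, (((a' x : ℝ) : EReal) - h x)

lemma EReal.coe_sub_le_iff_coe_sub_le {a r : ℝ} {b : EReal} :
    (a : EReal) - b ≤ r ↔ ((a - r : ℝ) : EReal) ≤ b := by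
  rw [EReal.sub_le_iff_le_add (.inr (EReal.coe_ne_top r)) (.inr (EReal.coe_ne_bot r)),
    EReal.coe_sub, EReal.sub_le_iff_le_add (.inl (EReal.coe_ne_bot r)) (.inl (EReal.coe_ne_top r)),
    add_comm]

lemma ContinuousLinearMap.apply_eq_comp_inl_add_mul {E : Type*} [AddCommGroup E] [Module ℝ E]
    [TopologicalSpace E] (f : E × ℝ →L[ℝ] ℝ) (y : E) (t : ℝ) :
    f (y, t) = f.comp (.inl ℝ E ℝ) y + f (0, 1) * t := by
  rw [← f.comp_inl_add_comp_inr (y, t), mul_comm, ← smul_eq_mul, ← map_smul]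
  simp

section AffineMinorant

variable {E : Type*}

def realEpigraph (h : E → EReal) : Set (E × ℝ) := {p | h p.1 ≤ p.2}

lemma LowerSemicontinuous.isClosed_realEpigraph [TopologicalSpace E] {h : E → EReal}
    (hlsc : LowerSemicontinuous h) : IsClosed (realEpigraph h) :=
  hlsc.isClosed_epigraph.preimage
    (continuous_fst.prodMk (continuous_coe_real_ereal.comp continuous_snd))

variable {h : E → EReal}

lemma slope_nonneg_of_separation {g : E → ℝ} {β s : ℝ} {x₀ : E} {t₀ : ℝ} (h₀ : h x₀ ≤ t₀)
    (hsep : ∀ y (t : ℝ), h y ≤ t → s < g y + β * t) : 0 ≤ β := by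
  by_contra! hβ
  have hs := hsep x₀ t₀ h₀
  -- at this height the separating hyperplane meets the vertical line over `x₀`
  set t := t₀ + (g x₀ + β * t₀ - s) / -β
  have ht₀ : t₀ ≤ t := le_add_of_nonneg_right (div_nonneg (by linarith) (by linarith))
  have hgt : g x₀ + β * t = s := by
    have : β ≠ 0 := hβ.ne
    simp only [t]
    field_simp
    ring
  linarith [hsep x₀ t (h₀.trans (EReal.coe_le_coe_iff.mpr ht₀))]

variable [AddCommGroup E] [Module ℝ E] [TopologicalSpace E]

def IsAffineMinorant (h : E → EReal) (φ : StrongDual ℝ E) (r : ℝ) : Prop :=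
  ∀ y, ((φ y - r : ℝ) : EReal) ≤ h y

lemma exists_isAffineMinorant_gt_of_separation {g : StrongDual ℝ E} {β s c : ℝ} {x : E}
    (hβ : 0 < β) (hx : g x + β * c < s) (hsep : ∀ y (t : ℝ), h y ≤ t → s < g y + β * t) :
    ∃ φ r, IsAffineMinorant h φ r ∧ c < φ x - r := by
  refine ⟨-β⁻¹ • g, -β⁻¹ * s, fun y => EReal.le_of_forall_lt_iff_le.mp fun t ht => ?_, ?_⟩
  · have hyt := hsep y t ht.le
    rw [EReal.coe_le_coe_iff, ← mul_le_mul_iff_of_pos_left hβ]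
    simp only [smul_apply, smul_eq_mul]
    field_simp
    linarith
  · rw [← mul_lt_mul_iff_of_pos_left hβ]
    simp only [smul_apply, smul_eq_mul]
    field_simp
    linarith

lemma exists_isAffineMinorant_gt_of_vertical {φ₀ : StrongDual ℝ E} {r₀ : ℝ}
    (h₀ : IsAffineMinorant h φ₀ r₀) {g : StrongDual ℝ E} {s : ℝ} {x : E} (hx : g x < s)
    (hsep : ∀ y, h y ≠ ⊤ → s ≤ g y) (c : ℝ) :
    ∃ φ r, IsAffineMinorant h φ r ∧ c < φ x - r := by
  set k := (|c - (φ₀ x - r₀)| + 1) / (s - g x)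
  have hk : 0 ≤ k := by positivity
  have hkx : k * (s - g x) = |c - (φ₀ x - r₀)| + 1 := div_mul_cancel₀ _ (by linarith)
  refine ⟨φ₀ - k • g, r₀ - k * s, fun y => ?_, ?_⟩
  · rcases eq_or_ne (h y) ⊤ with hy | hy
    · exact hy ▸ le_top
    refine le_trans (EReal.coe_le_coe_iff.mpr ?_) (h₀ y)
    simp only [sub_apply, smul_apply, smul_eq_mul]
    nlinarith [hsep y hy]
  · simp only [sub_apply, smul_apply, smul_eq_mul]
    linarith [le_abs_self (c - (φ₀ x - r₀))]

lemma hConj_le_of_isAffineMinorant {φ : StrongDual ℝ E} {r : ℝ}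
    (hφ : IsAffineMinorant h φ r) : hConj h (StrongDual.toWeakDual φ) ≤ r :=
  iSup_le fun y => EReal.coe_sub_le_iff_coe_sub_le.mpr (hφ y)

lemma coe_sub_le_of_wConj_le {V : Type*} [AddCommGroup V] [Module ℝ V] [TopologicalSpace V]
    {F : E → V → EReal} {a' : WeakDual ℝ E} {μ : StrongDual ℝ V} {r : ℝ}
    (hr : wConj F a' μ ≤ r) (x : E) : ((a' x - r : ℝ) : EReal) ≤ F x 0 := by
  refine EReal.coe_sub_le_iff_coe_sub_le.mp (le_trans ?_ hr)
  simpa [wConj] using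
    le_iSup (fun p : E × V => (((a' p.1 + μ p.2 : ℝ) : EReal) - F p.1 p.2)) (x, 0)

variable [IsTopologicalAddGroup E] [ContinuousSMul ℝ E] [LocallyConvexSpace ℝ E]

lemma exists_separation_of_lt_realEpigraph (hconvex : Convex ℝ (realEpigraph h))
    (hlsc : LowerSemicontinuous h) {x : E} {c : ℝ} (hc : (c : EReal) < h x) :
    ∃ (g : StrongDual ℝ E) (β s : ℝ), g x + β * c < s ∧
      ∀ y (t : ℝ), h y ≤ t → s < g y + β * t := by
  obtain ⟨f, s, hfx, hf⟩ := geometric_hahn_banach_point_closed hconvex hlsc.isClosed_realEpigraph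
    (show (x, c) ∉ realEpigraph h from not_le.mpr hc)
  refine ⟨f.comp (.inl ℝ E ℝ), f (0, 1), s, ?_, fun y t ht => ?_⟩
  · rwa [← f.apply_eq_comp_inl_add_mul]
  · rw [← f.apply_eq_comp_inl_add_mul]
    exact hf (y, t) ht

lemma exists_isAffineMinorant_gt_of_ne_top (hconvex : Convex ℝ (realEpigraph h))
    (hlsc : LowerSemicontinuous h) {x : E} (hx : h x ≠ ⊤) {c : ℝ} (hc : (c : EReal) < h x) :
    ∃ φ r, IsAffineMinorant h φ r ∧ c < φ x - r := by
  obtain ⟨g, β, s, hgx, hsep⟩ := exists_separation_of_lt_realEpigraph hconvex hlsc hc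
  have hxt := EReal.le_coe_toReal hx
  rcases (slope_nonneg_of_separation hxt hsep).lt_or_eq with hβ | rfl
  · exact exists_isAffineMinorant_gt_of_separation hβ hgx hsep
  · linarith [hsep x _ hxt]

theorem exists_isAffineMinorant_gt (hconvex : Convex ℝ (realEpigraph h))
    (hlsc : LowerSemicontinuous h) (hbot : ∀ x, h x ≠ ⊥) (hproper : ∃ x, h x ≠ ⊤) {x : E} {c : ℝ}
    (hc : (c : EReal) < h x) :
    ∃ φ r, IsAffineMinorant h φ r ∧ c < φ x - r := by
  obtain ⟨g, β, s, hgx, hsep⟩ := exists_separation_of_lt_realEpigraph hconvex hlsc hc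
  obtain ⟨x₀, hx₀⟩ := hproper
  rcases (slope_nonneg_of_separation (EReal.le_coe_toReal hx₀) hsep).lt_or_eq with hβ | rfl
  · exact exists_isAffineMinorant_gt_of_separation hβ hgx hsep
  have hlt : (((h x₀).toReal - 1 : ℝ) : EReal) < h x₀ := by
    lift h x₀ to ℝ using ⟨hx₀, hbot x₀⟩ with a
    exact EReal.coe_lt_coe_iff.mpr (sub_one_lt a)
  obtain ⟨φ₀, r₀, h₀, -⟩ := exists_isAffineMinorant_gt_of_ne_top hconvex hlsc hx₀ hlt
  refine exists_isAffineMinorant_gt_of_vertical h₀ (by simpa using hgx) (fun y hy => ?_) c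
  simpa using (hsep y _ (EReal.le_coe_toReal hy)).le

end AffineMinorant

set_option linter.unusedSectionVars false

/-- Lemma 4.1: `(𝔅_h) ⟹ (𝔄_h)`. -/
theorem stmt_15 {U : Type*} (F : U → X → Y → EReal) (h : X → EReal)
    (hbot : ∀ x, h x ≠ ⊥) (hproper : ∃ x, h x ≠ ⊤)
    (hconvex : Convex ℝ {p : X × ℝ | h p.1 ≤ (p.2 : EReal)})
    (hlsc : LowerSemicontinuous h)
    (hB : ∀ a' : WeakDual ℝ X, hConj h a' ≠ ⊤ →
      ∃ (u : U) (μ : Y →L[ℝ] ℝ), wConj (F u) a' μ ≤ hConj h a') :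
    ∀ x : X, h x ≤ ⨆ u : U, F u x 0 := by
  intro x
  refine EReal.ge_of_forall_gt_iff_ge.mp fun c hc => ?_
  obtain ⟨φ, r, hφ, hcx⟩ := exists_isAffineMinorant_gt hconvex hlsc hbot hproper hc
  have hconj := hConj_le_of_isAffineMinorant hφ
  obtain ⟨u, μ, hu⟩ := hB _ (ne_top_of_le_ne_top (EReal.coe_ne_top r) hconj)
  calc (c : EReal) ≤ ((φ x - r : ℝ) : EReal) := EReal.coe_le_coe_iff.mpr hcx.le
    _ ≤ F u x 0 := coe_sub_le_of_wConj_le (hu.trans hconj) x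
    _ ≤ ⨆ u, F u x 0 := le_iSup (fun u => F u x 0) u
end
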